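/- arXiv:0809.1194 — 5 statements merged into one kernel-verified Lean document; each statement's English description precedes it below -/
import Mathlib

section
/- Let N ≥ 1 and let z_1, …, z_n be elements of ℤ[ζ_N] (viewed inside ℂ) such that |z_1|² + … + |z_n|² = r for some rational number r with 0 < r ≤ 1. Then there exists an index i₀ such that z_i = 0 for all i ≠ i₀ and z_{i₀} is a root of unity; in particular r = 1. -/
/-!
Complex conjugation restricts to `K = ℚ(ζ)` and commutes with every embedding `φ : K → ℂ`,
since `φ ζ` is again a root of unity, whose conjugate is its inverse. Applying `φ` to
`∑ zᵢ z̄ᵢ = r` therefore gives `∑ |φ zᵢ|² = r ≤ 1`, so every conjugate of a nonzero `zᵢ` lies in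
the closed unit disc and Kronecker's theorem makes `zᵢ` a root of unity, of absolute value `1`.
As `0 < ∑ |zᵢ|² ≤ 1`, exactly one `zᵢ` is nonzero, and `r = 1`.
-/

open Complex ComplexConjugate IntermediateField

section EmbeddingsCommuteWithConj

variable {K : Type*} [Field K] [NumberField K] {c : K →+* K}

theorem normSq_embedding_le_of_sum_mul_eq (hc : ∀ (φ : K →+* ℂ) x, φ (c x) = conj (φ x))
    {ι : Type*} [Fintype ι] {x : ι → K} {r : ℚ} (hsum : ∑ j, x j * c (x j) = r)
    (φ : K →+* ℂ) (i : ι) : normSq (φ (x i)) ≤ r := by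
  have hφsum : ∑ j, (normSq (φ (x j)) : ℂ) = ((r : ℝ) : ℂ) := by
    simpa [← mul_conj, hc] using congrArg φ hsum
  have : ∑ j, normSq (φ (x j)) = r := by exact_mod_cast hφsum
  exact this ▸ Finset.single_le_sum (f := fun j ↦ normSq (φ (x j))) (fun j _ ↦ normSq_nonneg _)
    (Finset.mem_univ i)

theorem exists_pow_eq_one_of_sum_mul_eq (hc : ∀ (φ : K →+* ℂ) x, φ (c x) = conj (φ x))
    {ι : Type*} [Fintype ι] {x : ι → K} (hx : ∀ i, IsIntegral ℤ (x i)) {r : ℚ} (hr : r ≤ 1)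
    (hsum : ∑ j, x j * c (x j) = r) {i : ι} (hi : x i ≠ 0) : ∃ m, 0 < m ∧ x i ^ m = 1 := by
  have hle (φ : K →+* ℂ) : ‖φ (x i)‖ ≤ 1 := by
    have : ‖φ (x i)‖ ^ 2 ≤ 1 := by
      rw [← normSq_eq_norm_sq]
      exact (normSq_embedding_le_of_sum_mul_eq hc hsum φ i).trans (by exact_mod_cast hr)
    exact (sq_le_one_iff₀ (norm_nonneg _)).mp this
  obtain ⟨m, hm, h⟩ := NumberField.Embeddings.pow_eq_one_of_norm_le_one K ℂ hi (hx i) hle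
  exact ⟨m, hm, h⟩

end EmbeddingsCommuteWithConj

section RootOfUnity

variable {ζ : ℂ} {N : ℕ}

theorem conj_eq_inv_of_pow_eq_one {u : ℂ} (hu : u ^ N = 1) (hN : N ≠ 0) : conj u = u⁻¹ :=
  (inv_eq_conj (norm_eq_one_of_pow_eq_one hu hN)).symm

theorem conj_mem_adjoin_of_pow_eq_one (hζ : ζ ^ N = 1) (hN : N ≠ 0) {x : ℂ} (hx : x ∈ ℚ⟮ζ⟯) :
    conj x ∈ ℚ⟮ζ⟯ := by
  have : ℚ⟮ζ⟯.map (starRingEnd ℂ).toRatAlgHom ≤ ℚ⟮ζ⟯ := by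
    rw [adjoin_map, Set.image_singleton, adjoin_simple_le_iff]
    exact (conj_eq_inv_of_pow_eq_one hζ hN) ▸ inv_mem (mem_adjoin_simple_self ℚ ζ)
  exact this ⟨x, hx, rfl⟩

noncomputable def adjoinConj (hζ : ζ ^ N = 1) (hN : N ≠ 0) : ℚ⟮ζ⟯ →+* ℚ⟮ζ⟯ :=
  (((starRingEnd ℂ).comp ℚ⟮ζ⟯.val.toRingHom)).codRestrict ℚ⟮ζ⟯.toSubfield
    fun x ↦ conj_mem_adjoin_of_pow_eq_one hζ hN x.2

@[simp]
theorem coe_adjoinConj (hζ : ζ ^ N = 1) (hN : N ≠ 0) (x : ℚ⟮ζ⟯) :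
    (adjoinConj hζ hN x : ℂ) = conj (x : ℂ) := rfl

theorem embedding_adjoinConj (hζ : ζ ^ N = 1) (hN : N ≠ 0) (φ : ℚ⟮ζ⟯ →+* ℂ) (x : ℚ⟮ζ⟯) :
    φ (adjoinConj hζ hN x) = conj (φ x) := by
  suffices ((φ.comp (adjoinConj hζ hN)).toRatAlgHom = ((starRingEnd ℂ).comp φ).toRatAlgHom) from
    DFunLike.congr_fun this x
  refine adjoin_algHom_ext ℚ fun y hy ↦ ?_
  rw [Set.mem_singleton_iff] at hy
  subst y
  set g : ℚ⟮ζ⟯ := AdjoinSimple.gen ℚ ζ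
  have hg : g ^ N = 1 := Subtype.ext (by simpa [g] using hζ)
  have hcg : adjoinConj hζ hN g = g⁻¹ := Subtype.ext (by simp [g, conj_eq_inv_of_pow_eq_one hζ hN])
  have hφg : φ g ^ N = 1 := by rw [← map_pow, hg, map_one]
  change φ (adjoinConj hζ hN g) = conj (φ g)
  rw [hcg, map_inv₀, conj_eq_inv_of_pow_eq_one hφg hN]

end RootOfUnity

theorem exists_ne_zero_forall_ne_eq_zero_of_sum_normSq {ι : Type*} [Fintype ι] {z : ι → ℂ}
    {r : ℝ} (hsum : ∑ i, normSq (z i) = r) (hr0 : 0 < r) (hr1 : r ≤ 1)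
    (hunit : ∀ i, z i ≠ 0 → normSq (z i) = 1) :
    ∃ i₀, z i₀ ≠ 0 ∧ (∀ i, i ≠ i₀ → z i = 0) ∧ r = 1 := by
  classical
  obtain ⟨i₀, -, hi₀⟩ : ∃ i₀ ∈ Finset.univ, z i₀ ≠ 0 := by
    by_contra! h
    rw [Finset.sum_eq_zero fun i hi ↦ by simp [h i hi]] at hsum
    linarith
  have hzero (i : ι) (hi : i ≠ i₀) : z i = 0 := by
    by_contra hzi
    have : normSq (z i₀) + normSq (z i) ≤ r :=
      hsum ▸ Finset.add_le_sum (fun j _ ↦ normSq_nonneg _) (Finset.mem_univ _)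
        (Finset.mem_univ _) (Ne.symm hi)
    linarith [hunit i₀ hi₀, hunit i hzi]
  refine ⟨i₀, hi₀, hzero, ?_⟩
  rw [← hsum, Finset.sum_eq_single i₀ (fun i _ hi ↦ by simp [hzero i hi]) (by simp), hunit i₀ hi₀]

/-- Proposition (Kronecker-type): if cyclotomic integers `z_1, …, z_n` satisfy
`|z_1|² + … + |z_n|² = r` for a rational `0 < r ≤ 1`, then all `z_i` vanish except
one, which is a root of unity, and `r = 1`. -/
theorem stmt0 (N n : ℕ) (hN : 1 ≤ N) (ζ : ℂ) (hζ : IsPrimitiveRoot ζ N)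
    (z : Fin n → ℂ) (hz : ∀ i, z i ∈ Subring.closure ({ζ} : Set ℂ))
    (r : ℚ) (hr0 : 0 < r) (hr1 : r ≤ 1)
    (hsum : ∑ i, z i * (starRingEnd ℂ) (z i) = (r : ℂ)) :
    (∃ i₀ : Fin n, (∀ i, i ≠ i₀ → z i = 0) ∧ ∃ m : ℕ, 0 < m ∧ z i₀ ^ m = 1) ∧ r = 1 := by
  have hN0 : N ≠ 0 := by omega
  have hζN : ζ ^ N = 1 := hζ.pow_eq_one
  have hζint : IsIntegral ℤ ζ := hζ.isIntegral hN
  have : FiniteDimensional ℚ ℚ⟮ζ⟯ := adjoin.finiteDimensional hζint.tower_top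
  have : NumberField ℚ⟮ζ⟯ := ⟨⟩
  have hclosure : Subring.closure {ζ} ≤ ℚ⟮ζ⟯.toSubring :=
    Subring.closure_le.2 (Set.singleton_subset_iff.2 (mem_adjoin_simple_self ℚ ζ))
  let w (i : Fin n) : ℚ⟮ζ⟯ := ⟨z i, hclosure (hz i)⟩
  have hw_int (i : Fin n) : IsIntegral ℤ (w i) := by
    rw [← isIntegral_algebraMap_iff (algebraMap ℚ⟮ζ⟯ ℂ).injective]
    exact IsIntegral.of_mem_closure' {ζ} (by simpa using hζint) _ (hz i)
  have hw_sum : ∑ i, w i * adjoinConj hζN hN0 (w i) = r := Subtype.ext (by simpa [w] using hsum)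
  have hroot (i : Fin n) (hi : z i ≠ 0) : ∃ m, 0 < m ∧ z i ^ m = 1 := by
    obtain ⟨m, hm, hwm⟩ := exists_pow_eq_one_of_sum_mul_eq (embedding_adjoinConj hζN hN0)
      hw_int hr1 hw_sum (i := i) (fun h ↦ hi (congrArg Subtype.val h))
    exact ⟨m, hm, congrArg Subtype.val hwm⟩
  have hunit (i : Fin n) (hi : z i ≠ 0) : normSq (z i) = 1 := by
    obtain ⟨m, hm, hzm⟩ := hroot i hi
    rw [normSq_eq_norm_sq, norm_eq_one_of_pow_eq_one hzm hm.ne', one_pow]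
  have hsumR : ∑ i, normSq (z i) = (r : ℝ) := by
    simp only [mul_conj] at hsum
    exact_mod_cast hsum
  obtain ⟨i₀, hi₀, hzero, hr⟩ :=
    exists_ne_zero_forall_ne_eq_zero_of_sum_normSq hsumR (by exact_mod_cast hr0)
      (by exact_mod_cast hr1) hunit
  exact ⟨⟨i₀, hzero, hroot i₀ hi₀⟩, by exact_mod_cast hr⟩
end

section
/- Let K ⊆ ℂ be a finite Galois extension of ℚ that is stable under complex conjugation, and assume that the restriction of complex conjugation to K is a central element of the Galois group Gal(K/ℚ). Let z_1, …, z_n ∈ K be algebraic integers such that |z_1|² + … + |z_n|² = r for some rational number r with 0 < r ≤ 1. Then there exists an index i₀ such that z_i = 0 for all i ≠ i₀ and z_{i₀} is a root of unity; in particular r = 1. -/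
/-!
Since conjugation `τ` is central in `Gal(K/ℚ)`, every embedding `f : K → ℂ` intertwines `τ` with
complex conjugation, so applying `f` to `∑ zᵢ τ(zᵢ) = r` gives `∑ |f zᵢ|² = r ≤ 1` for every `f`.
Hence every conjugate of a nonzero `zᵢ₀` lies in the closed unit disk, and by Kronecker's theorem
`zᵢ₀` is a root of unity. Then `∑ |zᵢ|² = r ≤ 1 = |zᵢ₀|²` forces the other `zᵢ` to vanish and `r = 1`.
-/

open ComplexConjugate

section CentralConjugation

variable (K : IntermediateField ℚ ℂ) [Normal ℚ K] {τ : K ≃ₐ[ℚ] K}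
  (hτ : ∀ z : K, (τ z : ℂ) = conj (z : ℂ)) (hcentral : ∀ σ : K ≃ₐ[ℚ] K, σ * τ = τ * σ)
include hτ hcentral

/-- Every embedding `f` of `K` is `σ` followed by the inclusion, for some `σ ∈ Gal(K/ℚ)`, and `σ`
commutes with `τ`. -/
theorem conj_embedding_apply (f : K →ₐ[ℚ] ℂ) (x : K) : conj (f x) = f (τ x) := by
  set σ := f.restrictNormal' K
  have hσ : ∀ y : K, (σ y : ℂ) = f y := f.restrictNormal_commutes K
  rw [← hσ, ← hσ, ← hτ, ← AlgEquiv.mul_apply, ← AlgEquiv.mul_apply, hcentral]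

theorem sum_normSq_embedding_eq {ι : Type*} [Fintype ι] (w : ι → K) (q : ℚ)
    (hw : ∑ i, (w i : ℂ) * conj (w i : ℂ) = q) (f : K →ₐ[ℚ] ℂ) :
    ∑ i, Complex.normSq (f (w i)) = q := by
  have hK : ∑ i, w i * τ (w i) = algebraMap ℚ K q := by
    apply (algebraMap K ℂ).injective
    simpa [← hτ] using hw
  have hf : ∑ i, f (w i) * conj (f (w i)) = q := by
    simp_rw [conj_embedding_apply K hτ hcentral, ← map_mul, ← map_sum, hK, AlgHom.commutes,
      eq_ratCast]
  simp only [Complex.mul_conj] at hf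
  exact_mod_cast hf

end CentralConjugation

theorem NumberField.exists_pow_eq_one_of_sum_normSq_le_one {K : Type*} [Field K] [NumberField K]
    {ι : Type*} [Fintype ι] {w : ι → K} (hint : ∀ i, IsIntegral ℤ (w i))
    (hle : ∀ φ : K →+* ℂ, ∑ i, Complex.normSq (φ (w i)) ≤ 1) {i₀ : ι} (hi₀ : w i₀ ≠ 0) :
    ∃ m : ℕ, 0 < m ∧ w i₀ ^ m = 1 := by
  have hnorm_le : ∀ φ : K →+* ℂ, ‖φ (w i₀)‖ ≤ 1 := by
    intro φ
    have h := (Finset.single_le_sum (fun i _ => Complex.normSq_nonneg (φ (w i)))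
      (Finset.mem_univ i₀)).trans (hle φ)
    rw [Complex.normSq_eq_norm_sq] at h
    nlinarith [norm_nonneg (φ (w i₀))]
  obtain ⟨m, hm, hpow⟩ := Embeddings.pow_eq_one_of_norm_le_one K ℂ hi₀ (hint i₀) hnorm_le
  exact ⟨m, hm, hpow⟩

theorem eq_zero_of_sum_le_apply {ι : Type*} [Fintype ι] [DecidableEq ι] {a : ι → ℝ}
    (ha : ∀ i, 0 ≤ a i) {i₀ : ι} (h : ∑ i, a i ≤ a i₀) : ∀ i, i ≠ i₀ → a i = 0 := by
  have hrest : ∑ i ∈ Finset.univ.erase i₀, a i = 0 := by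
    have := Finset.add_sum_erase Finset.univ a (Finset.mem_univ i₀)
    have := Finset.sum_nonneg fun i (_ : i ∈ Finset.univ.erase i₀) => ha i
    linarith
  intro i hi
  exact (Finset.sum_eq_zero_iff_of_nonneg fun i _ => ha i).mp hrest i (by simp [hi])

theorem stmt1_general (K : IntermediateField ℚ ℂ) [FiniteDimensional ℚ K] [IsGalois ℚ K]
    (τ : K ≃ₐ[ℚ] K) (hτ : ∀ z : K, (τ z : ℂ) = (starRingEnd ℂ) (z : ℂ))
    (hcentral : ∀ σ : K ≃ₐ[ℚ] K, σ * τ = τ * σ)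
    (n : ℕ) (z : Fin n → ℂ) (hzK : ∀ i, z i ∈ K) (hint : ∀ i, IsIntegral ℤ (z i))
    (r : ℚ) (hr0 : 0 < r) (hr1 : r ≤ 1)
    (hsum : ∑ i, z i * (starRingEnd ℂ) (z i) = (r : ℂ)) :
    (∃ i₀ : Fin n, (∀ i, i ≠ i₀ → z i = 0) ∧ ∃ m : ℕ, 0 < m ∧ z i₀ ^ m = 1) ∧ r = 1 := by
  have : NumberField K := ⟨⟩
  set w : Fin n → K := fun i => ⟨z i, hzK i⟩
  have hnormSq := sum_normSq_embedding_eq K hτ hcentral w r hsum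
  have hz_sum : ∑ i, Complex.normSq (z i) = r := hnormSq K.val
  obtain ⟨i₀, hi₀⟩ : ∃ i₀, z i₀ ≠ 0 := by
    by_contra! h
    simp only [h, map_zero, Finset.sum_const_zero] at hz_sum
    exact hr0.ne (by exact_mod_cast hz_sum)
  obtain ⟨m, hm, hpow⟩ := NumberField.exists_pow_eq_one_of_sum_normSq_le_one
    (fun i => (isIntegral_algHom_iff (K.val.restrictScalars ℤ) K.val.injective).mp (hint i))
    (fun φ => (hnormSq φ.toRatAlgHom).trans_le (by exact_mod_cast hr1))
    (Subtype.coe_ne_coe.mp hi₀)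
  have hz_pow : z i₀ ^ m = 1 := congrArg Subtype.val hpow
  have hz_normSq : Complex.normSq (z i₀) = 1 := by
    rw [Complex.normSq_eq_norm_sq, Complex.norm_eq_one_of_pow_eq_one hz_pow hm.ne', one_pow]
  have hr : r = 1 := by
    have := Finset.single_le_sum (fun i _ => Complex.normSq_nonneg (z i)) (Finset.mem_univ i₀)
    rw [hz_sum, hz_normSq] at this
    exact le_antisymm hr1 (by exact_mod_cast this)
  refine ⟨⟨i₀, fun i hi => Complex.normSq_eq_zero.mp ?_, m, hm, hz_pow⟩, hr⟩
  refine eq_zero_of_sum_le_apply (fun i => Complex.normSq_nonneg _) ?_ i hi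
  rw [hz_sum, hz_normSq, hr, Rat.cast_one]

/-- Generalization: if `K ⊆ ℂ` is a finite Galois extension of `ℚ` stable under complex
conjugation, whose restriction of complex conjugation is central in `Gal(K/ℚ)`, and
`z_1, …, z_n ∈ K` are algebraic integers with `|z_1|² + … + |z_n|² = r` for a rational
`0 < r ≤ 1`, then all `z_i` vanish except one, which is a root of unity, and `r = 1`. -/
theorem stmt1 (K : IntermediateField ℚ ℂ) [FiniteDimensional ℚ K] [IsGalois ℚ K]
    (hstab : ∀ z ∈ K, (starRingEnd ℂ) z ∈ K)
    (τ : K ≃ₐ[ℚ] K) (hτ : ∀ z : K, (τ z : ℂ) = (starRingEnd ℂ) (z : ℂ))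
    (hcentral : ∀ σ : K ≃ₐ[ℚ] K, σ * τ = τ * σ)
    (n : ℕ) (z : Fin n → ℂ) (hzK : ∀ i, z i ∈ K) (hint : ∀ i, IsIntegral ℤ (z i))
    (r : ℚ) (hr0 : 0 < r) (hr1 : r ≤ 1)
    (hsum : ∑ i, z i * (starRingEnd ℂ) (z i) = (r : ℂ)) :
    (∃ i₀ : Fin n, (∀ i, i ≠ i₀ → z i = 0) ∧ ∃ m : ℕ, 0 < m ∧ z i₀ ^ m = 1) ∧ r = 1 :=
  stmt1_general K τ hτ hcentral n z hzK hint r hr0 hr1 hsum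
end

section
/- Let V be a complex inner product space, let v_1, …, v_n ∈ V be an orthonormal family, let N ≥ 1, and let c_1, …, c_n ∈ ℤ[ζ_N] (viewed inside ℂ). If the vector u = c_1 v_1 + … + c_n v_n satisfies ⟪u, u⟫ = 1, then there exists an index i₀ such that c_i = 0 for all i ≠ i₀ and c_{i₀} is a root of unity. -/
/-!
The coefficients lie in the number field `K = ℚ(ζ)`, and conjugation maps `ℤ[ζ]` into itself
(it sends `ζ` to `ζ⁻¹`) compatibly with every embedding `σ : K → ℂ`. So `∑ cᵢ c̄ᵢ = 1` survives
every `σ`, all conjugates of each `cᵢ` lie in the closed unit disc, and by Kronecker's theorem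
every nonzero `cᵢ` is a root of unity. These have absolute value `1`, so `∑ |cᵢ|² = 1` leaves
room for only one of them.
-/

open ComplexConjugate IntermediateField

theorem exists_forall_map_eq_conj_of_mem_closure {K : Type*} [Field K] {ζ : K} {N : ℕ} (hN : N ≠ 0)
    (hζ : ζ ^ N = 1) {x : K} (hx : x ∈ Subring.closure {ζ}) :
    ∃ y : K, ∀ φ : K →+* ℂ, φ y = conj (φ x) := by
  induction hx using Subring.closure_induction with
  | mem _ h =>
    rw [Set.mem_singleton_iff.mp h]
    refine ⟨ζ⁻¹, fun φ ↦ ?_⟩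
    have hφζ : ‖φ ζ‖ = 1 := Complex.norm_eq_one_of_pow_eq_one (by rw [← map_pow, hζ, map_one]) hN
    rw [map_inv₀, Complex.inv_eq_conj hφζ]
  | zero => exact ⟨0, fun φ ↦ by simp⟩
  | one => exact ⟨1, fun φ ↦ by simp⟩
  | add _ _ _ _ ha hb =>
    obtain ⟨a, ha⟩ := ha
    obtain ⟨b, hb⟩ := hb
    exact ⟨a + b, fun φ ↦ by simp [ha, hb]⟩
  | neg _ _ ha =>
    obtain ⟨a, ha⟩ := ha
    exact ⟨-a, fun φ ↦ by simp [ha]⟩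
  | mul _ _ _ _ ha hb =>
    obtain ⟨a, ha⟩ := ha
    obtain ⟨b, hb⟩ := hb
    exact ⟨a * b, fun φ ↦ by simp [ha, hb]⟩

theorem Finset.exists_eq_one_forall_ne_eq_zero_of_sum_eq_one {ι : Type*} [Fintype ι]
    {r : ι → ℝ} (hr : ∀ i, r i = 0 ∨ r i = 1) (h : ∑ i, r i = 1) :
    ∃ i₀, r i₀ = 1 ∧ ∀ i ≠ i₀, r i = 0 := by
  classical
  obtain ⟨i₀, -, hi₀⟩ := Finset.exists_ne_zero_of_sum_ne_zero (h.trans_ne one_ne_zero)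
  have hr₀ : r i₀ = 1 := (hr i₀).resolve_left hi₀
  refine ⟨i₀, hr₀, fun i hi ↦ (hr i).resolve_right fun hri ↦ ?_⟩
  have hpair : r i + r i₀ ≤ ∑ j, r j := by
    rw [← Finset.sum_pair hi]
    exact Finset.sum_le_sum_of_subset_of_nonneg (Finset.subset_univ _)
      fun j _ _ ↦ (hr j).elim (·.ge) fun h ↦ h ▸ zero_le_one
  linarith

namespace NumberField

theorem exists_pow_eq_one_of_sum_mul_eq_one {ι K : Type*} [Fintype ι] [Field K] [NumberField K]
    {x y : ι → K} (hx : ∀ i, IsIntegral ℤ (x i))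
    (hy : ∀ (i : ι) (φ : K →+* ℂ), φ (y i) = conj (φ (x i))) (h : ∑ i, x i * y i = 1) :
    ∃ i₀, (∀ i ≠ i₀, x i = 0) ∧ ∃ m : ℕ, 0 < m ∧ x i₀ ^ m = 1 := by
  have hsq (φ : K →+* ℂ) : ∑ i, ‖φ (x i)‖ ^ 2 = 1 := by
    have := congrArg φ h
    simp only [map_sum, map_mul, hy _ φ, Complex.mul_conj', map_one] at this
    exact_mod_cast this
  have hle (φ : K →+* ℂ) (i : ι) : ‖φ (x i)‖ ≤ 1 := by
    rw [← pow_le_one_iff_of_nonneg (norm_nonneg _) two_ne_zero, ← hsq φ]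
    exact Finset.single_le_sum (f := fun j ↦ ‖φ (x j)‖ ^ 2) (fun j _ ↦ by positivity)
      (Finset.mem_univ i)
  have hroot (i : ι) (hi : x i ≠ 0) : ∃ m : ℕ, 0 < m ∧ x i ^ m = 1 := by
    obtain ⟨m, hm, hpow⟩ := Embeddings.pow_eq_one_of_norm_le_one K ℂ hi (hx i) (hle · i)
    exact ⟨m, hm, hpow⟩
  obtain ⟨φ⟩ : Nonempty (K →+* ℂ) := inferInstance
  have hnorm_sq (i : ι) : ‖φ (x i)‖ ^ 2 = 0 ∨ ‖φ (x i)‖ ^ 2 = 1 := by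
    by_cases hi : x i = 0
    · simp [hi]
    · obtain ⟨m, hm, hpow⟩ := hroot i hi
      rw [Complex.norm_eq_one_of_pow_eq_one (by rw [← map_pow, hpow, map_one]) hm.ne']
      simp
  obtain ⟨i₀, hi₀, hzero⟩ :=
    Finset.exists_eq_one_forall_ne_eq_zero_of_sum_eq_one hnorm_sq (hsq φ)
  refine ⟨i₀, fun i hi ↦ by simpa using hzero i hi, hroot i₀ fun h ↦ by simp [h] at hi₀⟩

end NumberField

/-- If `v_1, …, v_n` is an orthonormal family in a complex inner product space and
`c_1, …, c_n ∈ ℤ[ζ_N]` are cyclotomic integers such that `u = ∑ c_i v_i` has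
`⟪u, u⟫ = 1`, then all `c_i` vanish except one, which is a root of unity. -/
theorem stmt3 {V : Type*} [NormedAddCommGroup V] [InnerProductSpace ℂ V]
    (n N : ℕ) (hN : 1 ≤ N) (ζ : ℂ) (hζ : IsPrimitiveRoot ζ N)
    (v : Fin n → V) (hv : Orthonormal ℂ v)
    (c : Fin n → ℂ) (hc : ∀ i, c i ∈ Subring.closure ({ζ} : Set ℂ))
    (hu : (inner ℂ (∑ i, c i • v i) (∑ i, c i • v i) : ℂ) = 1) :
    ∃ i₀ : Fin n, (∀ i, i ≠ i₀ → c i = 0) ∧ ∃ m : ℕ, 0 < m ∧ c i₀ ^ m = 1 := by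
  rw [hv.inner_sum] at hu
  have hζint : IsIntegral ℤ ζ := hζ.isIntegral hN
  let K := ℚ⟮ζ⟯
  have : FiniteDimensional ℚ K := adjoin.finiteDimensional hζint.tower_top
  have : NumberField K := ⟨⟩
  let ζK : K := AdjoinSimple.gen ℚ ζ
  have hmap : (Subring.closure {ζK}).map (K.val : K →+* ℂ) = Subring.closure {ζ} := by
    rw [RingHom.map_closure, Set.image_singleton]
    rfl
  choose x hxK hxc using fun i ↦ Subring.mem_map.mp (hmap ▸ hc i)
  have hζK : IsPrimitiveRoot ζK N := hζ.of_map_of_injective (f := K.val) K.val.injective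
  choose y hy using fun i ↦
    exists_forall_map_eq_conj_of_mem_closure (by omega) hζK.pow_eq_one (hxK i)
  have hxint (i : Fin n) : IsIntegral ℤ (x i) :=
    IsIntegral.of_mem_closure' _ (by simpa using hζK.isIntegral hN) _ (hxK i)
  have hsum : ∑ i, x i * y i = 1 := (K.val : K →+* ℂ).injective <| by
    simp only [map_sum, map_mul, hy, hxc, map_one, ← hu, mul_comm]
  obtain ⟨i₀, hzero, m, hm, hpow⟩ :=
    NumberField.exists_pow_eq_one_of_sum_mul_eq_one hxint hy hsum
  refine ⟨i₀, fun i hi ↦ by rw [← hxc, hzero i hi]; rfl, m, hm, ?_⟩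
  rw [← hxc, ← map_pow, hpow, map_one]
end

section
/- Let n ≥ 1 and let i be an integer with 1 ≤ i ≤ n. Then there exist pairwise distinct complex numbers x_1, …, x_{n+1} such that x_1 · x_2 ⋯ x_{n+1} = 1, the values x_k^{n+1} are equal for all k = 1, …, n+1, and (x_1 · x_2 ⋯ x_i)^{n+1} = (−1)^{i(n+1−i)}. -/
/-!
Take a primitive `2(n+1)`-th root of unity `ω` and `x_k = ω ^ (n + 2k)`. These are distinct
for `k ≤ n` because `ω²` is a primitive `(n+1)`-th root of unity, and since `ω ^ (n+1) = -1`
every `x_k ^ (n+1)` equals `(-1) ^ n`. The partial products are `ω ^ (i (n + i - 1))`;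
for `i = n + 1` this is `ω ^ (2(n+1) n) = 1`, and in general its `(n+1)`-th power is
`(-1) ^ (i (n + i - 1))`, whose exponent differs from `i (n + 1 - i)` by the even number
`2 i (i - 1)`.
-/

open Finset

theorem prod_range_pow_add_two_mul {M : Type*} [CommMonoid M] (ω : M) (n m : ℕ) :
    ∏ k ∈ range m, ω ^ (n + 2 * k) = ω ^ (m * (n + m - 1)) := by
  rw [prod_pow_eq_pow_sum, sum_add_distrib, ← mul_sum, sum_const, card_range, smul_eq_mul,
    mul_comm 2, sum_range_id_mul_two]
  rcases m with _ | m
  · simp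
  · rw [show n + (m + 1) - 1 = n + m by omega, Nat.add_sub_cancel, mul_add]

theorem neg_one_pow_mul_add_sub_one {R : Type*} [Ring R] {n i : ℕ}
    (hi : i ≤ n + 1) : (-1 : R) ^ (i * (n + i - 1)) = (-1) ^ (i * (n + 1 - i)) := by
  have hsum : i * (n + i - 1) + i * (n + 1 - i) = 2 * (i * n) := by
    rcases i with _ | i
    · simp
    · rw [← mul_add, show n + (i + 1) - 1 + (n + 1 - (i + 1)) = 2 * n by omega]
      ring
  rw [neg_one_pow_eq_pow_mod_two, neg_one_pow_eq_pow_mod_two (n := i * (n + 1 - i))]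
  congr 1
  omega

namespace IsPrimitiveRoot

variable {R : Type*} [CommRing R] {ω : R} {n : ℕ}

theorem pow_succ_eq_neg_one [NoZeroDivisors R] (hω : IsPrimitiveRoot ω (2 * (n + 1))) :
    ω ^ (n + 1) = -1 :=
  (hω.pow (by positivity) (mul_comm _ _)).eq_neg_one_of_two_right

theorem pow_add_two_mul_inj (hω : IsPrimitiveRoot ω (2 * (n + 1))) {k l : ℕ}
    (hk : k < n + 1) (hl : l < n + 1) (h : ω ^ (n + 2 * k) = ω ^ (n + 2 * l)) : k = l := by
  have hsq : IsPrimitiveRoot (ω ^ 2) (n + 1) := hω.pow (by positivity) rfl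
  simp only [pow_add, pow_mul] at h
  exact hsq.pow_inj hk hl ((hω.isUnit (by positivity)).pow n |>.mul_left_cancel h)

theorem pow_add_two_mul_pow_succ [NoZeroDivisors R] (hω : IsPrimitiveRoot ω (2 * (n + 1)))
    (k : ℕ) : (ω ^ (n + 2 * k)) ^ (n + 1) = (-1) ^ n := by
  rw [pow_right_comm, hω.pow_succ_eq_neg_one, pow_add, pow_mul, neg_one_sq, one_pow, mul_one]

theorem prod_range_succ_pow_add_two_mul (hω : IsPrimitiveRoot ω (2 * (n + 1))) :
    ∏ k ∈ range (n + 1), ω ^ (n + 2 * k) = 1 := by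
  rw [prod_range_pow_add_two_mul, show (n + 1) * (n + (n + 1) - 1) = 2 * (n + 1) * n by
    rw [show n + (n + 1) - 1 = 2 * n by omega]; ring, pow_mul, hω.pow_eq_one, one_pow]

theorem prod_range_pow_add_two_mul_pow_succ [NoZeroDivisors R]
    (hω : IsPrimitiveRoot ω (2 * (n + 1))) {i : ℕ} (hi : i ≤ n + 1) :
    (∏ k ∈ range i, ω ^ (n + 2 * k)) ^ (n + 1) = (-1) ^ (i * (n + 1 - i)) := by
  rw [prod_range_pow_add_two_mul, pow_right_comm, hω.pow_succ_eq_neg_one,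
    neg_one_pow_mul_add_sub_one hi]

end IsPrimitiveRoot

theorem stmt9_general (n i : ℕ) (hi2 : i ≤ n) :
    ∃ x : ℕ → ℂ,
      (∀ k l, k < n + 1 → l < n + 1 → k ≠ l → x k ≠ x l) ∧
      (∏ k ∈ Finset.range (n + 1), x k) = 1 ∧
      (∀ k l, k < n + 1 → l < n + 1 → x k ^ (n + 1) = x l ^ (n + 1)) ∧
      (∏ k ∈ Finset.range i, x k) ^ (n + 1) = (-1 : ℂ) ^ (i * (n + 1 - i)) := by
  obtain ⟨ω, hω⟩ : ∃ ω : ℂ, IsPrimitiveRoot ω (2 * (n + 1)) :=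
    ⟨_, Complex.isPrimitiveRoot_exp _ (by positivity)⟩
  refine ⟨fun k => ω ^ (n + 2 * k), ?_, hω.prod_range_succ_pow_add_two_mul, ?_,
    hω.prod_range_pow_add_two_mul_pow_succ (by omega)⟩
  · exact fun k l hk hl hkl h => hkl (hω.pow_add_two_mul_inj hk hl h)
  · intro k l _ _
    rw [hω.pow_add_two_mul_pow_succ, hω.pow_add_two_mul_pow_succ]

/-- Existence of `t_0` for type `A_n` and any maximal parabolic: there are pairwise
distinct complex numbers `x_1, …, x_{n+1}` with product `1`, all `x_k^{n+1}` equal,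
and `(x_1 ⋯ x_i)^{n+1} = (−1)^{i(n+1−i)}`. -/
theorem stmt9 (n i : ℕ) (hn : 1 ≤ n) (hi1 : 1 ≤ i) (hi2 : i ≤ n) :
    ∃ x : ℕ → ℂ,
      (∀ k l, k < n + 1 → l < n + 1 → k ≠ l → x k ≠ x l) ∧
      (∏ k ∈ Finset.range (n + 1), x k) = 1 ∧
      (∀ k l, k < n + 1 → l < n + 1 → x k ^ (n + 1) = x l ^ (n + 1)) ∧
      (∏ k ∈ Finset.range i, x k) ^ (n + 1) = (-1 : ℂ) ^ (i * (n + 1 - i)) :=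
  stmt9_general n i hi2
end

section
/- Let n ≥ 2 and let ζ ∈ ℂ be a primitive 2n-th root of unity, and set x_k = ζ^k for k = 1, …, n. Then x_k ≠ 1 for all k; for all k < l both x_k ≠ x_l and x_k · x_l ≠ 1; and every complex number x with x² = x_1 · x_2 ⋯ x_n satisfies x^{2n} = (−1)^{n(n+1)/2}. -/
/-! All exponents in the first two claims lie strictly between `0` and `2n`, so primitivity
rules out `ζ ^ m = 1`. For the last one, `x ^ (2n) = (ζ ^ (n(n+1)/2)) ^ n` by Gauss' sum, and
`ζ ^ n = -1`. -/

open Finset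

theorem Finset.sum_Icc_one_id (n : ℕ) : ∑ k ∈ Icc 1 n, k = n * (n + 1) / 2 := by
  have h : ∑ k ∈ range (n + 1), k = ∑ k ∈ Icc 1 n, k := by
    rw [range_eq_Ico, sum_eq_sum_Ico_succ_bot n.succ_pos, Nat.succ_eq_add_one,
      Ico_add_one_right_eq_Icc, zero_add, zero_add]
  rw [← h, sum_range_id, Nat.add_sub_cancel, mul_comm]

theorem IsPrimitiveRoot.pow_eq_neg_one {R : Type*} [CommRing R] [NoZeroDivisors R] {ζ : R}
    {n : ℕ} (hζ : IsPrimitiveRoot ζ (2 * n)) (hn : n ≠ 0) : ζ ^ n = -1 :=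
  (hζ.pow (by omega) (mul_comm 2 n)).eq_neg_one_of_two_right

theorem pow_two_mul_eq_neg_one_pow_of_sq_eq_prod_Icc {M : Type*} [CommMonoid M] [HasDistribNeg M]
    {ζ x : M} {n : ℕ} (hζ : ζ ^ n = -1) (hx : x ^ 2 = ∏ k ∈ Icc 1 n, ζ ^ k) :
    x ^ (2 * n) = (-1) ^ (n * (n + 1) / 2) := by
  rw [pow_mul, hx, prod_pow_eq_pow_sum, sum_Icc_one_id, ← pow_mul, mul_comm, pow_mul, hζ]

theorem stmt10_general (n : ℕ) (ζ : ℂ) (hζ : IsPrimitiveRoot ζ (2 * n)) :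
    (∀ k, 1 ≤ k → k ≤ n → ζ ^ k ≠ 1) ∧
    (∀ k l, 1 ≤ k → k < l → l ≤ n → ζ ^ k ≠ ζ ^ l ∧ ζ ^ k * ζ ^ l ≠ 1) ∧
    (∀ x : ℂ, x ^ 2 = ∏ k ∈ Finset.Icc 1 n, ζ ^ k →
      x ^ (2 * n) = (-1 : ℂ) ^ (n * (n + 1) / 2)) := by
  refine ⟨fun k hk hkn => hζ.pow_ne_one_of_pos_of_lt (by omega) (by omega),
    fun k l hk hkl hln => ⟨fun h => ?_, ?_⟩, fun x hx => ?_⟩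
  · have := hζ.pow_inj (by omega) (by omega) h
    omega
  · rw [← pow_add]
    exact hζ.pow_ne_one_of_pos_of_lt (by omega) (by omega)
  · rcases n.eq_zero_or_pos with rfl | hn
    · simp
    · exact pow_two_mul_eq_neg_one_pow_of_sq_eq_prod_Icc (hζ.pow_eq_neg_one hn.ne') hx

/-- Verification of condition (⋆) for type `B_n`, last simple root: with `ζ` a primitive
`2n`-th root of unity and `x_k = ζ^k` (`1 ≤ k ≤ n`), one has `x_k ≠ 1`, the `x_k` are
pairwise distinct with `x_k x_l ≠ 1`, and any square root `x` of `x_1 ⋯ x_n` satisfies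
`x^{2n} = (−1)^{n(n+1)/2}`. -/
theorem stmt10 (n : ℕ) (hn : 2 ≤ n) (ζ : ℂ) (hζ : IsPrimitiveRoot ζ (2 * n)) :
    (∀ k, 1 ≤ k → k ≤ n → ζ ^ k ≠ 1) ∧
    (∀ k l, 1 ≤ k → k < l → l ≤ n → ζ ^ k ≠ ζ ^ l ∧ ζ ^ k * ζ ^ l ≠ 1) ∧
    (∀ x : ℂ, x ^ 2 = ∏ k ∈ Finset.Icc 1 n, ζ ^ k →
      x ^ (2 * n) = (-1 : ℂ) ^ (n * (n + 1) / 2)) :=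
  stmt10_general n ζ hζ
end
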